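/- Let C ⊆ ℕ be a cohesive set and let L = (ℕ, ≺) be a computable linear order that is dense and has no greatest and no least element. Then the cohesive power Π_C L is order-isomorphic to (ℚ, <), and hence to L itself. -/

import Mathlib

/-- `X ⊆* Y`: `X` is contained in `Y` up to finitely many elements. -/
def AlmostSubset (X Y : Set ℕ) : Prop := (X \ Y).Finite

/-- `W ⊆ ℕ` is computably enumerable: it is the domain of a partial computable function. -/
def CESet (W : Set ℕ) : Prop := ∃ f : ℕ →. ℕ, Partrec f ∧ W = f.Dom

/-- `W ⊆ ℕ` is computable (decidable). -/
def ComputableSet (W : Set ℕ) : Prop :=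
  ∃ f : ℕ → Bool, Computable f ∧ ∀ n, n ∈ W ↔ f n = true

/-- `C ⊆ ℕ` is cohesive: `C` is infinite, and for every c.e. set `W`, either `W ∩ C`
or `Wᶜ ∩ C` is finite. -/
def Cohesive (C : Set ℕ) : Prop :=
  C.Infinite ∧ ∀ W : Set ℕ, CESet W → (W ∩ C).Finite ∨ (Wᶜ ∩ C).Finite

/-- `C ⊆ ℕ` is r-cohesive. -/
def RCohesive (C : Set ℕ) : Prop :=
  C.Infinite ∧ ∀ W : Set ℕ, ComputableSet W → (W ∩ C).Finite ∨ (Wᶜ ∩ C).Finite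

/-- `C` is co-maximal: its complement is maximal, i.e. `C` is cohesive with c.e. complement. -/
def CoMaximal (C : Set ℕ) : Prop := Cohesive C ∧ CESet Cᶜ

/-- A computable (decidable) binary relation on `ℕ`. -/
def ComputableRel (r : ℕ → ℕ → Prop) : Prop :=
  ∃ f : ℕ → ℕ → Bool, Computable₂ f ∧ ∀ m n, r m n ↔ f m n = true

/-- `y` is the immediate successor of `x` with respect to the strict order `r`. -/
def ImmSucc {α : Type*} (r : α → α → Prop) (x y : α) : Prop :=
  r x y ∧ ∀ z, ¬(r x z ∧ r z y)

/-- A strict order on `ℕ` has order type ω when it is isomorphic to `(ℕ, <)`. -/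
def OrderTypeOmega (r : ℕ → ℕ → Prop) : Prop :=
  Nonempty (r ≃r ((· < ·) : ℕ → ℕ → Prop))

/-- Carrier of the cohesive power: partial computable functions whose domain
almost contains `C`. -/
def CohCarrier (C : Set ℕ) : Type :=
  {φ : ℕ →. ℕ // Partrec φ ∧ (C \ φ.Dom).Finite}

/-- Two partial functions agree (are defined and equal) on almost all of `C`. -/
def eqAE (C : Set ℕ) (φ ψ : ℕ →. ℕ) : Prop :=
  (C \ {n | ∃ a, a ∈ φ n ∧ a ∈ ψ n}).Finite

/-- The equivalence relation underlying the cohesive power. -/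
def cohSetoid (C : Set ℕ) : Setoid (CohCarrier C) where
  r φ ψ := eqAE C φ.1 ψ.1
  iseqv := by
    constructor
    · intro φ
      refine φ.2.2.subset fun n hn => ⟨hn.1, fun hd => hn.2 ?_⟩
      obtain ⟨a, ha⟩ := (PFun.mem_dom _ _).mp hd
      exact ⟨a, ha, ha⟩
    · intro φ ψ h
      exact h.subset fun n hn => ⟨hn.1, fun ⟨a, h1, h2⟩ => hn.2 ⟨a, h2, h1⟩⟩
    · intro φ ψ χ h1 h2
      refine (h1.union h2).subset fun n hn => ?_
      by_cases hmem : ∃ a, a ∈ φ.1 n ∧ a ∈ ψ.1 n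
      · obtain ⟨a, ha1, ha2⟩ := hmem
        refine Or.inr ⟨hn.1, fun ⟨b, hb1, hb2⟩ => hn.2 ⟨a, ha1, ?_⟩⟩
        rwa [Part.mem_unique ha2 hb1]
      · exact Or.inl ⟨hn.1, hmem⟩

/-- The domain of the cohesive power of a computable structure on `ℕ` over `C`. -/
def CohPow (C : Set ℕ) : Type := Quotient (cohSetoid C)

/-- The class of a partial computable function in the cohesive power. -/
def CohPow.mk {C : Set ℕ} (φ : CohCarrier C) : CohPow C := Quotient.mk (cohSetoid C) φ

/-- `φ(n) ≺ ψ(n)` (both defined) for almost all `n ∈ C`. -/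
def ltAE (C : Set ℕ) (r : ℕ → ℕ → Prop) (φ ψ : ℕ →. ℕ) : Prop :=
  (C \ {n | ∃ a b, a ∈ φ n ∧ b ∈ ψ n ∧ r a b}).Finite

/-- The order of the cohesive power of the computable linear order `(ℕ, r)` over `C`. -/
def CohPow.Lt (C : Set ℕ) (r : ℕ → ℕ → Prop) (x y : CohPow C) : Prop :=
  ∃ φ ψ : CohCarrier C, x = CohPow.mk φ ∧ y = CohPow.mk ψ ∧ ltAE C r φ.1 ψ.1

/-- The sum `L₀ + L₁` of two linear orders on `ℕ`, coded on `ℕ` via the computable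
pairing `⟨0, l⟩ ↦ 2l`, `⟨1, l⟩ ↦ 2l + 1`. -/
def sumRel (r₀ r₁ : ℕ → ℕ → Prop) (m n : ℕ) : Prop :=
  (m % 2 = 0 ∧ n % 2 = 1) ∨
  (m % 2 = 0 ∧ n % 2 = 0 ∧ r₀ (m / 2) (n / 2)) ∨
  (m % 2 = 1 ∧ n % 2 = 1 ∧ r₁ (m / 2) (n / 2))

/-- The lexicographic product `L₀ ×ₗ L₁` (first coordinate dominant) of two linear
orders on `ℕ`, coded on `ℕ` via the computable pairing `Nat.pair`. -/
def lexRel (r₀ r₁ : ℕ → ℕ → Prop) (m n : ℕ) : Prop :=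
  r₀ m.unpair.1 n.unpair.1 ∨ (m.unpair.1 = n.unpair.1 ∧ r₁ m.unpair.2 n.unpair.2)

/-- The strict order of `ℕ + ℚ ×ₗ ℤ`. -/
def NQZlt : ℕ ⊕ ℚ × ℤ → ℕ ⊕ ℚ × ℤ → Prop :=
  Sum.Lex (· < ·) (Prod.Lex (· < ·) (· < ·))

/-- The element of the cohesive power represented by the constant function `k`. -/
def constElt (C : Set ℕ) (k : ℕ) : CohPow C :=
  CohPow.mk ⟨fun _ => Part.some k, Partrec.const' (Part.some k), by
    have : (PFun.Dom fun _ : ℕ => Part.some k) = Set.univ := by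
      ext n; simp [PFun.Dom]
    rw [this, Set.diff_univ]; exact Set.finite_empty⟩

/-- The element of the cohesive power represented by the identity function. -/
def idElt (C : Set ℕ) : CohPow C :=
  CohPow.mk ⟨fun n => Part.some n, Partrec.some, by
    have : (PFun.Dom fun n : ℕ => Part.some n) = Set.univ := by
      ext n; simp [PFun.Dom]
    rw [this, Set.diff_univ]; exact Set.finite_empty⟩


set_option maxHeartbeats 1600000
/-! ### Auxiliary lemmas for `cohesivePower_dlo` -/

section CohAux

open Classical

private lemma ae_subset1' {C A E : Set ℕ} (hA : (C\A).Finite)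
    (h : ∀ n ∈ C, n ∈ A → n ∈ E) : (C \ E).Finite := by
  refine hA.subset fun n hn => ?_
  by_cases h1 : n ∈ A
  · exact absurd (h n hn.1 h1) hn.2
  · exact ⟨hn.1, h1⟩

private lemma ae_subset2' {C A B E : Set ℕ} (hA : (C\A).Finite) (hB : (C\B).Finite)
    (h : ∀ n ∈ C, n ∈ A → n ∈ B → n ∈ E) : (C \ E).Finite := by
  refine (hA.union hB).subset fun n hn => ?_
  by_cases h1 : n ∈ A
  · by_cases h2 : n ∈ B
    · exact absurd (h n hn.1 h1 h2) hn.2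
    · exact Or.inr ⟨hn.1, h2⟩
  · exact Or.inl ⟨hn.1, h1⟩

private lemma ae_subset3' {C A B D E : Set ℕ} (hA : (C\A).Finite) (hB : (C\B).Finite)
    (hD : (C\D).Finite) (h : ∀ n ∈ C, n ∈ A → n ∈ B → n ∈ D → n ∈ E) : (C \ E).Finite := by
  refine ae_subset2' (ae_subset2' hA hB (fun n hn h1 h2 => (⟨h1, h2⟩ : n ∈ A ∩ B))) hD ?_
  rintro n hn ⟨h1, h2⟩ h3
  exact h n hn h1 h2 h3

private lemma ae_subset4' {C A B D D' E : Set ℕ} (hA : (C\A).Finite) (hB : (C\B).Finite)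
    (hD : (C\D).Finite) (hD' : (C\D').Finite)
    (h : ∀ n ∈ C, n ∈ A → n ∈ B → n ∈ D → n ∈ D' → n ∈ E) : (C \ E).Finite := by
  refine ae_subset3' (ae_subset2' hA hB (fun n hn h1 h2 => (⟨h1, h2⟩ : n ∈ A ∩ B))) hD hD' ?_
  rintro n hn ⟨h1, h2⟩ h3 h4
  exact h n hn h1 h2 h3 h4

private lemma ae_exists2' {C : Set ℕ} (hC : C.Infinite) {A B : Set ℕ}
    (hA : (C\A).Finite) (hB : (C\B).Finite) : ∃ n, n ∈ C ∧ n ∈ A ∧ n ∈ B := by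
  obtain ⟨n, hn⟩ := (hC.diff (hA.union hB)).nonempty
  simp only [Set.mem_diff, Set.mem_union, not_or] at hn
  refine ⟨n, hn.1, ?_, ?_⟩
  · by_contra h; exact hn.2.1 ⟨hn.1, h⟩
  · by_contra h; exact hn.2.2 ⟨hn.1, h⟩

/-- Generic partial search gadget. -/
private def W3 (φ ψ : ℕ →. ℕ) (f : ℕ → ℕ → ℕ → Bool) : ℕ →. ℕ := fun n =>
  (φ n).bind fun a => (ψ n).bind fun b => Nat.rfind fun c => Part.some (f a b c)

private lemma W3_partrec {φ ψ : ℕ →. ℕ} (hφ : Partrec φ) (hψ : Partrec ψ)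
    {f : ℕ → ℕ → ℕ → Bool} (hf : Computable fun p : ℕ × ℕ × ℕ => f p.1 p.2.1 p.2.2) :
    Partrec (W3 φ ψ f) := by
  have g : Computable fun w : ((ℕ × ℕ) × ℕ) × ℕ => (w.1.1.2, w.1.2, w.2) :=
    ((Computable.snd.comp (Computable.fst.comp Computable.fst)).pair
      ((Computable.snd.comp Computable.fst).pair Computable.snd))
  have hc : Computable fun w : ((ℕ × ℕ) × ℕ) × ℕ => f w.1.1.2 w.1.2 w.2 :=
    (hf.comp g).of_eq fun n => rfl
  have h1 : Partrec₂ fun (p : ℕ × ℕ) (b : ℕ) =>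
      (Nat.rfind fun c => Part.some (f p.2 b c) : Part ℕ) := by
    apply Partrec.rfind
    exact ((Partrec.some.comp hc).of_eq fun n => rfl : _)
  have h2 : Partrec₂ fun (n : ℕ) (a : ℕ) =>
      (ψ n).bind fun b => (Nat.rfind fun c => Part.some (f a b c) : Part ℕ) := by
    have hψ' : Partrec fun p : ℕ × ℕ => ψ p.1 :=
      (hψ.comp (Computable.fst (α := ℕ) (β := ℕ))).of_eq fun n => rfl
    exact (hψ'.bind h1).of_eq fun n => rfl
  exact (hφ.bind h2).of_eq fun n => rfl

private lemma mem_W3 {φ ψ : ℕ →. ℕ} {f : ℕ → ℕ → ℕ → Bool} {n c : ℕ} :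
    c ∈ W3 φ ψ f n ↔ ∃ a ∈ φ n, ∃ b ∈ ψ n, c ∈ Nat.rfind fun k => Part.some (f a b k) := by
  simp [W3]

private lemma dom_W3 {φ ψ : ℕ →. ℕ} {f : ℕ → ℕ → ℕ → Bool} {n : ℕ} :
    (W3 φ ψ f n).Dom ↔ ∃ a ∈ φ n, ∃ b ∈ ψ n, ∃ c, f a b c = true := by
  rw [Part.dom_iff_mem]
  constructor
  · rintro ⟨c, hc⟩
    obtain ⟨a, ha, b, hb, hr⟩ := mem_W3.1 hc
    exact ⟨a, ha, b, hb, c, by simpa using Nat.rfind_spec hr⟩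
  · rintro ⟨a, ha, b, hb, c, hc⟩
    have : (Nat.rfind fun k => Part.some (f a b k)).Dom := by
      exact Nat.rfind_dom.2 ⟨c, by simpa using hc, fun {m} _ => trivial⟩
    obtain ⟨v, hv⟩ := Part.dom_iff_mem.1 this
    exact ⟨v, mem_W3.2 ⟨a, ha, b, hb, hv⟩⟩

private lemma W3_spec {φ ψ : ℕ →. ℕ} {f : ℕ → ℕ → ℕ → Bool} {n c : ℕ}
    (h : c ∈ W3 φ ψ f n) : ∃ a ∈ φ n, ∃ b ∈ ψ n, f a b c = true := by
  obtain ⟨a, ha, b, hb, hr⟩ := mem_W3.1 h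
  exact ⟨a, ha, b, hb, by simpa using Nat.rfind_spec hr⟩

private lemma ltAE_congr {C : Set ℕ} {r : ℕ → ℕ → Prop} {φ φ' ψ ψ' : ℕ →. ℕ}
    (h : ltAE C r φ ψ) (h1 : eqAE C φ φ') (h2 : eqAE C ψ ψ') : ltAE C r φ' ψ' := by
  refine ae_subset3' h h1 h2 ?_
  rintro n _ ⟨a, b, ha, hb, hr⟩ ⟨a', ha1, ha2⟩ ⟨b', hb1, hb2⟩
  exact ⟨a', b', ha2, hb2, by rwa [Part.mem_unique ha1 ha, Part.mem_unique hb1 hb]⟩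

private lemma ltAE_trans {C : Set ℕ} {r : ℕ → ℕ → Prop}
    (htr : Transitive r) {φ ψ χ : ℕ →. ℕ}
    (h1 : ltAE C r φ ψ) (h2 : ltAE C r ψ χ) : ltAE C r φ χ := by
  refine ae_subset2' h1 h2 ?_
  rintro n _ ⟨a, b, ha, hb, hr⟩ ⟨b', c, hb', hc, hr'⟩
  rw [Part.mem_unique hb' hb] at hr'
  exact ⟨a, c, ha, hc, htr hr hr'⟩

private lemma not_ltAE_and_eqAE {C : Set ℕ} (hinf : C.Infinite) {r : ℕ → ℕ → Prop}
    (hsto : IsStrictTotalOrder ℕ r) {φ ψ : ℕ →. ℕ}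
    (h : ltAE C r φ ψ) (h' : eqAE C φ ψ) : False := by
  haveI := hsto
  obtain ⟨n, -, ⟨a, b, ha, hb, hr⟩, ⟨c, hc1, hc2⟩⟩ := ae_exists2' hinf h h'
  rw [Part.mem_unique ha hc1, Part.mem_unique hb hc2] at hr
  exact irrefl_of r c hr

private lemma cohPow_countable (C : Set ℕ) : Countable (CohPow C) := by
  haveI : Countable (CohCarrier C) := by
    have hinj : Function.Injective fun φ : CohCarrier C =>
        Classical.choose (Nat.Partrec.Code.exists_code.1 (Partrec.nat_iff.1 φ.2.1)) := by
      intro φ ψ h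
      apply Subtype.ext
      have h1 := Classical.choose_spec (Nat.Partrec.Code.exists_code.1 (Partrec.nat_iff.1 φ.2.1))
      have h2 := Classical.choose_spec (Nat.Partrec.Code.exists_code.1 (Partrec.nat_iff.1 ψ.2.1))
      have h' : Classical.choose (Nat.Partrec.Code.exists_code.1 (Partrec.nat_iff.1 φ.2.1)) =
          Classical.choose (Nat.Partrec.Code.exists_code.1 (Partrec.nat_iff.1 ψ.2.1)) := h
      rw [← h1, ← h2, h']
    exact hinj.countable
  exact inferInstanceAs (Countable (Quotient (cohSetoid C)))

private lemma trichAE {C : Set ℕ} (hC : Cohesive C) {r : ℕ → ℕ → Prop} {f : ℕ → ℕ → Bool}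
    (hf : Computable₂ f) (hfr : ∀ m n, r m n ↔ f m n = true)
    (hsto : IsStrictTotalOrder ℕ r) (φ ψ : CohCarrier C) :
    ltAE C r φ.1 ψ.1 ∨ eqAE C φ.1 ψ.1 ∨ ltAE C r ψ.1 φ.1 := by
  haveI := hsto
  -- the lt set
  have g1 : Computable fun p : ℕ × ℕ × ℕ => p.1 := Computable.fst
  have g2 : Computable fun p : ℕ × ℕ × ℕ => p.2.1 := Computable.fst.comp Computable.snd
  have g3 : Computable fun p : ℕ × ℕ × ℕ => p.2.2 := Computable.snd.comp Computable.snd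
  have hfc : Computable fun p : ℕ × ℕ × ℕ => f p.1 p.2.1 := hf.comp g1 g2
  have hWlt : ∀ n, (W3 φ.1 ψ.1 (fun a b _ => f a b) n).Dom ↔
      n ∈ {n | ∃ a b, a ∈ φ.1 n ∧ b ∈ ψ.1 n ∧ r a b} := by
    intro n
    rw [dom_W3]
    constructor
    · rintro ⟨a, ha, b, hb, c, hc⟩
      exact ⟨a, b, ha, hb, (hfr a b).2 hc⟩
    · rintro ⟨a, b, ha, hb, hr⟩
      exact ⟨a, ha, b, hb, 0, (hfr a b).1 hr⟩
  have hce_lt : CESet (PFun.Dom (W3 φ.1 ψ.1 fun a b _ => f a b)) :=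
    ⟨_, W3_partrec φ.2.1 ψ.2.1 hfc, rfl⟩
  -- the eq set
  have heqc : Computable fun p : ℕ × ℕ × ℕ => (decide (p.1 = p.2.1) : Bool) :=
    (Primrec.eq (α := ℕ)).decide.to_comp.comp g1 g2
  have hWeq : ∀ n, (W3 φ.1 ψ.1 (fun a b _ => decide (a = b)) n).Dom ↔
      n ∈ {n | ∃ a, a ∈ φ.1 n ∧ a ∈ ψ.1 n} := by
    intro n
    rw [dom_W3]
    constructor
    · rintro ⟨a, ha, b, hb, c, hc⟩
      have : a = b := by simpa using hc
      exact ⟨a, ha, this ▸ hb⟩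
    · rintro ⟨a, ha, hb⟩
      exact ⟨a, ha, a, hb, 0, by simp⟩
  have hce_eq : CESet (PFun.Dom (W3 φ.1 ψ.1 fun a b _ => decide (a = b))) :=
    ⟨_, W3_partrec φ.2.1 ψ.2.1 heqc, rfl⟩
  rcases hC.2 _ hce_lt with hlt | hlt
  · rcases hC.2 _ hce_eq with heq | heq
    · -- both lt and eq sets meet C finitely: ψ < φ a.e.
      refine Or.inr (Or.inr ?_)
      have hlt' : (C \ (PFun.Dom (W3 φ.1 ψ.1 fun a b _ => f a b))ᶜ).Finite := by
        refine hlt.subset fun n hn => ?_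
        exact ⟨not_not.1 hn.2, hn.1⟩
      have heq' : (C \ (PFun.Dom (W3 φ.1 ψ.1 fun a b _ => decide (a = b)))ᶜ).Finite := by
        refine heq.subset fun n hn => ?_
        exact ⟨not_not.1 hn.2, hn.1⟩
      refine ae_subset4' φ.2.2 ψ.2.2 hlt' heq' ?_
      intro n _ h1 h2 h3 h4
      obtain ⟨a, ha⟩ := Part.dom_iff_mem.1 h1
      obtain ⟨b, hb⟩ := Part.dom_iff_mem.1 h2
      have hnab : ¬ r a b := fun hr => h3 ((hWlt n).2 ⟨a, b, ha, hb, hr⟩)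
      have hneq : a ≠ b := fun he => h4 ((hWeq n).2 ⟨a, ha, he ▸ hb⟩)
      rcases trichotomous_of r a b with h | h | h
      · exact absurd h hnab
      · exact absurd h hneq
      · exact ⟨b, a, hb, ha, h⟩
    · -- eq a.e.
      refine Or.inr (Or.inl ?_)
      refine heq.subset fun n hn => ?_
      exact ⟨fun hc => hn.2 ((hWeq n).1 hc), hn.1⟩
  · -- lt a.e.
    refine Or.inl ?_
    refine hlt.subset fun n hn => ?_
    exact ⟨fun hc => hn.2 ((hWlt n).1 hc), hn.1⟩

private lemma lt_of_mk {C : Set ℕ} {r : ℕ → ℕ → Prop} {φ ψ : CohCarrier C}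
    (h : CohPow.Lt C r (CohPow.mk φ) (CohPow.mk ψ)) : ltAE C r φ.1 ψ.1 := by
  obtain ⟨φ', ψ', h1, h2, h⟩ := h
  have e1 : eqAE C φ'.1 φ.1 := Quotient.exact h1.symm
  have e2 : eqAE C ψ'.1 ψ.1 := Quotient.exact h2.symm
  exact ltAE_congr h e1 e2

private lemma cohPow_sto {C : Set ℕ} (hC : Cohesive C) {r : ℕ → ℕ → Prop} {f : ℕ → ℕ → Bool}
    (hf : Computable₂ f) (hfr : ∀ m n, r m n ↔ f m n = true)
    (hsto : IsStrictTotalOrder ℕ r) :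
    IsStrictTotalOrder (CohPow C) (CohPow.Lt C r) := by
  haveI := hsto
  haveI htri : IsTrichotomous (CohPow C) (CohPow.Lt C r) := by
    constructor
    intro x y
    obtain ⟨φ, rfl⟩ := Quot.exists_rep x
    obtain ⟨ψ, rfl⟩ := Quot.exists_rep y
    intro hxy hyx
    rcases trichAE hC hf hfr hsto φ ψ with h | h | h
    · exact (hxy ⟨φ, ψ, rfl, rfl, h⟩).elim
    · exact Quot.sound h
    · exact (hyx ⟨ψ, φ, rfl, rfl, h⟩).elim
  haveI hirr : IsIrrefl (CohPow C) (CohPow.Lt C r) := by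
    constructor
    rintro x ⟨φ, ψ, h1, h2, h⟩
    have he : eqAE C φ.1 ψ.1 := Quotient.exact (h1.symm.trans h2)
    exact not_ltAE_and_eqAE hC.1 hsto h he
  haveI htr : IsTrans (CohPow C) (CohPow.Lt C r) := by
    constructor
    rintro x y z ⟨φ, ψ₁, rfl, hy, h1⟩ ⟨ψ₂, χ, hy2, rfl, h2⟩
    have he : eqAE C ψ₁.1 ψ₂.1 := Quotient.exact (hy.symm.trans hy2)
    have heφ : eqAE C φ.1 φ.1 := (cohSetoid C).refl φ
    have heχ : eqAE C χ.1 χ.1 := (cohSetoid C).refl χ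
    have h1' : ltAE C r φ.1 ψ₂.1 := ltAE_congr h1 heφ he
    have htr' : Transitive r := fun _ _ _ hab hbc => trans_of r hab hbc
    have : ltAE C r φ.1 χ.1 := ltAE_trans htr' h1' h2
    exact ⟨φ, χ, rfl, rfl, this⟩
  haveI : IsStrictOrder (CohPow C) (CohPow.Lt C r) := ⟨⟩
  exact ⟨⟩

private lemma cohPow_dense {C : Set ℕ} {r : ℕ → ℕ → Prop} {f : ℕ → ℕ → Bool}
    (hf : Computable₂ f) (hfr : ∀ m n, r m n ↔ f m n = true)
    (hd : ∀ a b, r a b → ∃ c, r a c ∧ r c b)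
    (φ ψ : CohCarrier C) (h : ltAE C r φ.1 ψ.1) :
    ∃ χ : CohCarrier C, ltAE C r φ.1 χ.1 ∧ ltAE C r χ.1 ψ.1 := by
  set g : ℕ → ℕ → ℕ → Bool := fun a b c => cond (f a c) (f c b) false with hg
  have hgt : ∀ a b c, g a b c = true ↔ r a c ∧ r c b := by
    intro a b c
    rw [hg]
    rw [hfr a c, hfr c b]
    cases hac : f a c <;> simp [hac]
  have hgc : Computable fun p : ℕ × ℕ × ℕ => g p.1 p.2.1 p.2.2 := by
    have g1 : Computable fun p : ℕ × ℕ × ℕ => p.1 := Computable.fst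
    have g2 : Computable fun p : ℕ × ℕ × ℕ => p.2.1 := Computable.fst.comp Computable.snd
    have g3 : Computable fun p : ℕ × ℕ × ℕ => p.2.2 := Computable.snd.comp Computable.snd
    have c1 : Computable fun p : ℕ × ℕ × ℕ => f p.1 p.2.2 := hf.comp g1 g3
    have c2 : Computable fun p : ℕ × ℕ × ℕ => f p.2.2 p.2.1 := hf.comp g3 g2
    exact Computable.cond c1 c2 (Computable.const false)
  have hpr : Partrec (W3 φ.1 ψ.1 g) := W3_partrec φ.2.1 ψ.2.1 hgc
  have hdom : (C \ PFun.Dom (W3 φ.1 ψ.1 g)).Finite := by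
    refine ae_subset3' φ.2.2 ψ.2.2 h ?_
    rintro n _ h1 h2 ⟨a, b, ha, hb, hr⟩
    obtain ⟨c, hc1, hc2⟩ := hd a b hr
    exact dom_W3.2 ⟨a, ha, b, hb, c, (hgt a b c).2 ⟨hc1, hc2⟩⟩
  refine ⟨⟨W3 φ.1 ψ.1 g, hpr, hdom⟩, ?_, ?_⟩
  · refine ae_subset1' hdom ?_
    intro n _ h1
    obtain ⟨c, hc⟩ := Part.dom_iff_mem.1 h1
    obtain ⟨a, ha, b, hb, hgc'⟩ := W3_spec hc
    exact ⟨a, c, ha, hc, ((hgt a b c).1 hgc').1⟩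
  · refine ae_subset1' hdom ?_
    intro n _ h1
    obtain ⟨c, hc⟩ := Part.dom_iff_mem.1 h1
    obtain ⟨a, ha, b, hb, hgc'⟩ := W3_spec hc
    exact ⟨c, b, hc, hb, ((hgt a b c).1 hgc').2⟩

private lemma cohPow_nomax {C : Set ℕ} {r : ℕ → ℕ → Prop} {f : ℕ → ℕ → Bool}
    (hf : Computable₂ f) (hfr : ∀ m n, r m n ↔ f m n = true)
    (hmax : ∀ a, ∃ b, r a b) (φ : CohCarrier C) :
    ∃ χ : CohCarrier C, ltAE C r φ.1 χ.1 := by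
  set g : ℕ → ℕ → ℕ → Bool := fun a _ c => f a c with hg
  have hgc : Computable fun p : ℕ × ℕ × ℕ => g p.1 p.2.1 p.2.2 := by
    have g1 : Computable fun p : ℕ × ℕ × ℕ => p.1 := Computable.fst
    have g3 : Computable fun p : ℕ × ℕ × ℕ => p.2.2 := Computable.snd.comp Computable.snd
    exact hf.comp g1 g3
  have hpr : Partrec (W3 φ.1 φ.1 g) := W3_partrec φ.2.1 φ.2.1 hgc
  have hdom : (C \ PFun.Dom (W3 φ.1 φ.1 g)).Finite := by
    refine ae_subset1' φ.2.2 ?_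
    intro n _ h1
    obtain ⟨a, ha⟩ := Part.dom_iff_mem.1 h1
    obtain ⟨c, hc⟩ := hmax a
    exact dom_W3.2 ⟨a, ha, a, ha, c, (hfr a c).1 hc⟩
  refine ⟨⟨W3 φ.1 φ.1 g, hpr, hdom⟩, ae_subset1' hdom ?_⟩
  intro n _ h1
  obtain ⟨c, hc⟩ := Part.dom_iff_mem.1 h1
  obtain ⟨a, ha, b, hb, hgc'⟩ := W3_spec hc
  exact ⟨a, c, ha, hc, (hfr a c).2 hgc'⟩

private lemma cohPow_nomin {C : Set ℕ} {r : ℕ → ℕ → Prop} {f : ℕ → ℕ → Bool}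
    (hf : Computable₂ f) (hfr : ∀ m n, r m n ↔ f m n = true)
    (hmin : ∀ a, ∃ b, r b a) (φ : CohCarrier C) :
    ∃ χ : CohCarrier C, ltAE C r χ.1 φ.1 := by
  set g : ℕ → ℕ → ℕ → Bool := fun a _ c => f c a with hg
  have hgc : Computable fun p : ℕ × ℕ × ℕ => g p.1 p.2.1 p.2.2 := by
    have g1 : Computable fun p : ℕ × ℕ × ℕ => p.1 := Computable.fst
    have g3 : Computable fun p : ℕ × ℕ × ℕ => p.2.2 := Computable.snd.comp Computable.snd
    exact hf.comp g3 g1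
  have hpr : Partrec (W3 φ.1 φ.1 g) := W3_partrec φ.2.1 φ.2.1 hgc
  have hdom : (C \ PFun.Dom (W3 φ.1 φ.1 g)).Finite := by
    refine ae_subset1' φ.2.2 ?_
    intro n _ h1
    obtain ⟨a, ha⟩ := Part.dom_iff_mem.1 h1
    obtain ⟨c, hc⟩ := hmin a
    exact dom_W3.2 ⟨a, ha, a, ha, c, (hfr c a).1 hc⟩
  refine ⟨⟨W3 φ.1 φ.1 g, hpr, hdom⟩, ae_subset1' hdom ?_⟩
  intro n _ h1
  obtain ⟨c, hc⟩ := Part.dom_iff_mem.1 h1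
  obtain ⟨a, ha, b, hb, hgc'⟩ := W3_spec hc
  exact ⟨c, a, hc, ha, (hfr c a).2 hgc'⟩

/-- Any countable strict total order that is dense and without endpoints is
isomorphic to `(ℚ, <)`. -/
private lemma strictOrderIsoRat {α : Type*} [Countable α] [Nonempty α] (s : α → α → Prop)
    (hsto : IsStrictTotalOrder α s)
    (hd : ∀ a b, s a b → ∃ c, s a c ∧ s c b)
    (hmax : ∀ a, ∃ b, s a b) (hmin : ∀ a, ∃ b, s b a) :
    Nonempty (s ≃r ((· < ·) : ℚ → ℚ → Prop)) := by
  classical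
  haveI := hsto
  letI : LinearOrder α := linearOrderOfSTO s
  haveI : DenselyOrdered α := ⟨fun a b h => by
    obtain ⟨c, h1, h2⟩ := hd a b h; exact ⟨c, h1, h2⟩⟩
  haveI : NoMaxOrder α := ⟨fun a => by obtain ⟨b, h⟩ := hmax a; exact ⟨b, h⟩⟩
  haveI : NoMinOrder α := ⟨fun a => by obtain ⟨b, h⟩ := hmin a; exact ⟨b, h⟩⟩
  obtain ⟨e⟩ := Order.iso_of_countable_dense (α := α) (β := ℚ)
  exact ⟨⟨e.toEquiv, fun {a b} => e.lt_iff_lt⟩⟩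

end CohAux

/-- The cohesive power of a computable dense linear order without endpoints is
isomorphic to `(ℚ, <)`, and hence to the order itself. -/
theorem cohesivePower_dlo (C : Set ℕ) (hC : Cohesive C)
    (r : ℕ → ℕ → Prop) (hcomp : ComputableRel r) (hsto : IsStrictTotalOrder ℕ r)
    (hdense : ∀ a b, r a b → ∃ c, r a c ∧ r c b)
    (hnomax : ∀ a, ∃ b, r a b) (hnomin : ∀ a, ∃ b, r b a) :
    Nonempty (CohPow.Lt C r ≃r ((· < ·) : ℚ → ℚ → Prop)) ∧
    Nonempty (CohPow.Lt C r ≃r r) := by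
  classical
  obtain ⟨f, hf, hfr⟩ := hcomp
  haveI := hsto
  haveI : Countable (CohPow C) := cohPow_countable C
  haveI : Nonempty (CohPow C) := ⟨constElt C 0⟩
  have hsto' : IsStrictTotalOrder (CohPow C) (CohPow.Lt C r) := cohPow_sto hC hf hfr hsto
  have hd' : ∀ x y, CohPow.Lt C r x y → ∃ z, CohPow.Lt C r x z ∧ CohPow.Lt C r z y := by
    rintro x y ⟨φ, ψ, rfl, rfl, h⟩
    obtain ⟨χ, h1, h2⟩ := cohPow_dense hf hfr hdense φ ψ h
    exact ⟨CohPow.mk χ, ⟨φ, χ, rfl, rfl, h1⟩, ⟨χ, ψ, rfl, rfl, h2⟩⟩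
  have hmax' : ∀ x, ∃ y, CohPow.Lt C r x y := by
    intro x
    obtain ⟨φ, rfl⟩ := Quot.exists_rep x
    obtain ⟨χ, h1⟩ := cohPow_nomax hf hfr hnomax φ
    exact ⟨CohPow.mk χ, φ, χ, rfl, rfl, h1⟩
  have hmin' : ∀ x, ∃ y, CohPow.Lt C r y x := by
    intro x
    obtain ⟨φ, rfl⟩ := Quot.exists_rep x
    obtain ⟨χ, h1⟩ := cohPow_nomin hf hfr hnomin φ
    exact ⟨CohPow.mk χ, χ, φ, rfl, rfl, h1⟩
  obtain ⟨e1⟩ := strictOrderIsoRat (CohPow.Lt C r) hsto' hd' hmax' hmin'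
  obtain ⟨e2⟩ := strictOrderIsoRat r hsto hdense hnomax hnomin
  exact ⟨⟨e1⟩, ⟨e1.trans e2.symm⟩⟩
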